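/- arXiv:2001.06711 — 8 statements merged into one kernel-verified Lean document; each statement's English description precedes it below -/
import Mathlib

section
/- Let G be a finite group and S a subgroup of G of order k and index n, with distinct right cosets Sg₁,…,Sgₙ. Suppose sets L₁,…,L_k partition G into complete sets of left coset representatives of S in G (each Lᵢ contains exactly one element from each left coset of S). Then the Cayley table of G with block-columns labeled by the right cosets Sgⱼ and block-rows labeled by the sets Lᵢ is a Cayley-Sudoku table: for each i and j, the set of products {l·c : l ∈ Lᵢ, c ∈ Sgⱼ} equals G, with each element appearing exactly once. -/
/-- `L` is a complete set of left coset representatives of `S` in `G`: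
it contains exactly one element of each left coset `xS`. -/
def CompleteLeftReps {G : Type*} [Group G] (S : Subgroup G) (L : Set G) : Prop :=
  ∀ x : G, ∃! l : G, l ∈ L ∧ x⁻¹ * l ∈ S

open Subgroup

theorem CompleteLeftReps.isComplement {G : Type*} [Group G] {S : Subgroup G} {L : Set G}
    (hL : CompleteLeftReps S L) : IsComplement L S := by
  rw [isComplement_iff_existsUnique_inv_mul_mem]
  intro x
  obtain ⟨l, ⟨hlL, hlS⟩, huniq⟩ := hL x
  refine ⟨⟨l, hlL⟩, by simpa using S.inv_mem hlS, ?_⟩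
  rintro ⟨l', hl'⟩ hl'S
  exact Subtype.ext (huniq l' ⟨hl', by simpa using S.inv_mem hl'S⟩)

theorem Subgroup.IsComplement.image_mul_right {G : Type*} [Group G] {S T : Set G}
    (h : IsComplement S T) (g : G) : IsComplement S ((· * g) '' T) := by
  let e : T ≃ (· * g) '' T := Equiv.Set.image _ T (mul_left_injective g)
  have hcomm : (fun x : S × ((· * g) '' T) => x.1.1 * x.2.1) ∘ Prod.map id e =
      (· * g) ∘ fun x : S × T => x.1.1 * x.2.1 := by
    funext x
    simp [e, mul_assoc]
  refine (Function.Bijective.of_comp_iff _ (Equiv.prodCongr (Equiv.refl S) e).bijective).1 ?_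
  exact hcomm ▸ (Equiv.mulRight g).bijective.comp h

theorem construction1R_general {G : Type*} [Group G] (S : Subgroup G) (k : ℕ)
    (L : Fin k → Set G)
    (hrep : ∀ i : Fin k, CompleteLeftReps S (L i)) :
    ∀ (i : Fin k) (g : G),
      Function.Bijective
        (fun p : (L i) × ((fun s : G => s * g) '' (S : Set G)) =>
          (p.1 : G) * (p.2 : G)) :=
  fun i g => (hrep i).isComplement.image_mul_right g

theorem construction1R {G : Type*} [Group G] [Fintype G] (S : Subgroup G) (k n : ℕ)
    (hk : Nat.card S = k) (hn : S.index = n)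
    (L : Fin k → Set G)
    (hpart : ∀ g : G, ∃! i : Fin k, g ∈ L i)
    (hrep : ∀ i : Fin k, CompleteLeftReps S (L i)) :
    ∀ (i : Fin k) (g : G),
      Function.Bijective
        (fun p : (L i) × ((fun s : G => s * g) '' (S : Set G)) =>
          (p.1 : G) * (p.2 : G)) :=
  construction1R_general S k L hrep
end

section
/- Let G be a finite group and S a subgroup of G. If sets L₁,…,L_k partition G and each Lᵢ is a complete set of left coset representatives of every conjugate S^g = g⁻¹Sg for all g ∈ G, then for each i and each left coset yS of S, the multiplication map Lᵢ × yS → G, (l, c) ↦ lc, is a bijection. -/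
/-- The conjugate subgroup `g⁻¹ S g`. -/
def conjBy {G : Type*} [Group G] (S : Subgroup G) (g : G) : Subgroup G :=
  S.map (MulAut.conj g⁻¹).toMonoidHom

/-!
Since `S^{y⁻¹} = y S y⁻¹`, the left coset `yS` is the right coset `S^{y⁻¹} y`. A complete set `L`
of left coset representatives of a subgroup `T` factors every `x` uniquely as `x = l t` with
`l ∈ L`, `t ∈ T`; applying this to `x y⁻¹` and `T = S^{y⁻¹}` factors `x` uniquely through
`L × T y = L × yS`.
-/

open Function

section

variable {G : Type*} [Group G]

theorem image_mul_left_eq_image_mul_right_conjBy_inv (S : Subgroup G) (y : G) :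
    (y * ·) '' (S : Set G) = (· * y) '' (conjBy S y⁻¹ : Set G) := by
  ext x
  simp only [Set.mem_image, conjBy, Subgroup.coe_map, inv_inv, MulEquiv.coe_toMonoidHom,
    MulAut.conj_apply, SetLike.mem_coe, exists_exists_and_eq_and, inv_mul_cancel_right]

namespace CompleteLeftReps

variable {T : Subgroup G} {L : Set G}

theorem existsUnique_inv_mul_mem (hL : CompleteLeftReps T L) (x : G) :
    ∃! l, l ∈ L ∧ l⁻¹ * x ∈ T := by
  have hsymm (l : G) : x⁻¹ * l ∈ T ↔ l⁻¹ * x ∈ T := by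
    rw [← T.inv_mem_iff, mul_inv_rev, inv_inv]
  simpa only [hsymm] using hL x

theorem bijective_mul_rightCoset (hL : CompleteLeftReps T L) (y : G) :
    Bijective (fun p : L × ((· * y) '' (T : Set G)) => (p.1 : G) * p.2) := by
  refine (bijective_iff_existsUnique _).2 fun x => ?_
  obtain ⟨l, ⟨hlL, hlx⟩, hl_unique⟩ := hL.existsUnique_inv_mul_mem (x * y⁻¹)
  refine ⟨(⟨l, hlL⟩, ⟨l⁻¹ * x, l⁻¹ * (x * y⁻¹), hlx, by group⟩), by simp, ?_⟩
  rintro ⟨⟨l', hl'L⟩, ⟨_, t, ht, rfl⟩⟩ (h : l' * (t * y) = x)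
  obtain rfl : l' = l := hl_unique l' ⟨hl'L, by simpa [← h, mul_assoc] using ht⟩
  ext <;> simp [← h]

end CompleteLeftReps

end

theorem construction2L_if_general {G : Type*} [Group G] (S : Subgroup G) (k : ℕ)
    (L : Fin k → Set G)
    (hrep : ∀ (i : Fin k) (g : G), CompleteLeftReps (conjBy S g) (L i)) :
    ∀ (i : Fin k) (y : G),
      Function.Bijective
        (fun p : (L i) × ((fun s : G => y * s) '' (S : Set G)) =>
          (p.1 : G) * (p.2 : G)) := by
  intro i y
  rw [image_mul_left_eq_image_mul_right_conjBy_inv]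
  exact (hrep i y⁻¹).bijective_mul_rightCoset y

theorem construction2L_if {G : Type*} [Group G] [Fintype G] (S : Subgroup G) (k : ℕ)
    (L : Fin k → Set G)
    (hpart : ∀ g : G, ∃! i : Fin k, g ∈ L i)
    (hrep : ∀ (i : Fin k) (g : G), CompleteLeftReps (conjBy S g) (L i)) :
    ∀ (i : Fin k) (y : G),
      Function.Bijective
        (fun p : (L i) × ((fun s : G => y * s) '' (S : Set G)) =>
          (p.1 : G) * (p.2 : G)) :=
  construction2L_if_general S k L hrep
end

section
/- Let G be a finite group and S a subgroup of G of index n. Suppose L is a set of size n such that for each left coset yS of S, the map L × yS → G, (l, c) ↦ lc, is a bijection onto G when ranged over all cosets simultaneously (i.e., each g ∈ G is written uniquely as lc with l ∈ L, c ∈ yS). Then L is a complete set of left coset representatives of S^g for every g ∈ G. -/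
open Pointwise MulOpposite Subgroup

theorem existsUnique_subtype_iff {α : Type*} {p q : α → Prop} :
    (∃! a : Subtype p, q a) ↔ ∃! a, p a ∧ q a :=
  ⟨fun ⟨⟨a, ha⟩, hq, h⟩ => ⟨a, ⟨ha, hq⟩, fun b hb => congrArg Subtype.val (h ⟨b, hb.1⟩ hb.2)⟩,
    fun ⟨a, ⟨ha, hq⟩, h⟩ => ⟨⟨a, ha⟩, hq, fun b hb => Subtype.ext (h b ⟨b.2, hb⟩)⟩⟩

section

variable {G : Type*} [Group G]

theorem completeLeftReps_iff_isComplement {H : Subgroup G} {L : Set G} :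
    CompleteLeftReps H L ↔ IsComplement L H := by
  rw [isComplement_iff_existsUnique_inv_mul_mem, CompleteLeftReps]
  refine forall_congr' fun x => ?_
  rw [← existsUnique_subtype_iff]
  simp only [SetLike.mem_coe, ← H.inv_mem_iff (x := (_ : G)⁻¹ * x), mul_inv_rev, inv_inv]

theorem Subgroup.isComplement_op_smul_right_iff {S T : Set G} (g : G) :
    IsComplement S (op g • T) ↔ IsComplement S T := by
  simp only [isComplement_iff_existsUnique_inv_mul_mem, Set.mem_smul_set_iff_inv_smul_mem,
    ← op_inv, op_smul_eq_mul, mul_assoc]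
  exact (Equiv.mulRight g⁻¹).forall_congr_right (q := fun x => ∃! s : S, (s : G)⁻¹ * x ∈ T)

theorem coe_conjBy (S : Subgroup G) (g : G) :
    (conjBy S g : Set G) = op g • g⁻¹ • (S : Set G) := by
  ext x
  simp only [conjBy, coe_map, MulEquiv.coe_toMonoidHom, MulAut.conj_apply, inv_inv, Set.mem_image,
    SetLike.mem_coe, Set.mem_smul_set_iff_inv_smul_mem, ← op_inv, op_smul_eq_mul, smul_eq_mul]
  constructor
  · rintro ⟨s, hs, rfl⟩
    simpa [mul_assoc] using hs
  · exact fun h => ⟨_, h, by group⟩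

end

theorem construction2L_only_if_general {G : Type*} [Group G] (S : Subgroup G)
    (L : Set G)
    (hbij : ∀ y : G,
      Function.Bijective
        (fun p : L × ((fun s : G => y * s) '' (S : Set G)) =>
          (p.1 : G) * (p.2 : G))) :
    ∀ g : G, CompleteLeftReps (conjBy S g) L := by
  intro g
  rw [completeLeftReps_iff_isComplement, coe_conjBy, isComplement_op_smul_right_iff]
  exact hbij g⁻¹

theorem construction2L_only_if {G : Type*} [Group G] [Fintype G] (S : Subgroup G)
    (n : ℕ) (hn : S.index = n) (L : Set G) (hL : Nat.card L = n)
    (hbij : ∀ y : G,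
      Function.Bijective
        (fun p : L × ((fun s : G => y * s) '' (S : Set G)) =>
          (p.1 : G) * (p.2 : G))) :
    ∀ g : G, CompleteLeftReps (conjBy S g) L :=
  construction2L_only_if_general S L hbij
end

section
/- (Baer's Theorem, converse direction) Let G be a finite group, S ≤ G, and let r₁,…,r_m be a fixed complete set of right coset representatives of S in G. If the operation Srᵢ · Srⱼ := S(rᵢrⱼ) on right cosets of S is a quasigroup operation (has two-sided cancellation), then {r₁,…,r_m} is a complete set of right coset representatives of S^g for every g ∈ G. -/
/-- `R` is a complete set of right coset representatives of `S` in `G`: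
it contains exactly one element of each right coset `Sx`. -/
def CompleteRightReps {G : Type*} [Group G] (S : Subgroup G) (R : Set G) : Prop :=
  ∀ x : G, ∃! r : G, r ∈ R ∧ r * x⁻¹ ∈ S

/-! Left multiplication by `g` carries the right cosets `g⁻¹ S g x` of `S ^ g` onto the right
cosets `S g x` of `S`. If `S g = S rᵢ`, then `S (g rⱼ) = S (rᵢ rⱼ)`, so by the quasigroup property
the `g rⱼ` meet every right coset of `S` exactly once; hence the `rⱼ` meet every right coset
of `S ^ g` exactly once. -/

section

variable {G : Type*} [Group G] (S : Subgroup G)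

theorem mem_conjBy_iff {g y : G} : y ∈ conjBy S g ↔ g * y * g⁻¹ ∈ S := by
  constructor
  · rintro ⟨s, hs, rfl⟩
    simpa [MulAut.conj, mul_assoc] using hs
  · intro h
    exact ⟨g * y * g⁻¹, h, by simp [MulAut.conj, mul_assoc]⟩

theorem mul_inv_mem_conjBy_iff {g x y : G} :
    y * x⁻¹ ∈ conjBy S g ↔ (g * y) * (g * x)⁻¹ ∈ S := by
  rw [mem_conjBy_iff]
  group

theorem mk_mul_right_eq_of_mul_inv_mem {a b : G} (h : a * b⁻¹ ∈ S) (c : G) :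
    Quotient.mk (QuotientGroup.rightRel S) (a * c) =
      Quotient.mk (QuotientGroup.rightRel S) (b * c) := by
  refine Quotient.sound (QuotientGroup.rightRel_apply.2 ?_)
  simpa [mul_assoc] using S.inv_mem h

theorem completeRightReps_conjBy_range_of_bijective {ι : Type*} {r : ι → G} {g : G}
    (hbij : Function.Bijective
      (fun j : ι => Quotient.mk (QuotientGroup.rightRel S) (g * r j))) :
    CompleteRightReps (conjBy S g) (Set.range r) := by
  have mem_iff (j : ι) (x : G) : r j * x⁻¹ ∈ conjBy S g ↔
      Quotient.mk (QuotientGroup.rightRel S) (g * r j) =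
        Quotient.mk (QuotientGroup.rightRel S) (g * x) := by
    rw [mul_inv_mem_conjBy_iff, eq_comm, Quotient.eq, QuotientGroup.rightRel_apply]
  intro x
  obtain ⟨j, hj⟩ := hbij.2 (Quotient.mk _ (g * x))
  refine ⟨r j, ⟨⟨j, rfl⟩, (mem_iff j x).2 hj⟩, ?_⟩
  rintro _ ⟨⟨j', rfl⟩, hj'⟩
  exact congrArg r (hbij.1 (((mem_iff j' x).1 hj').trans hj.symm))

end

theorem baer_converse_general {G : Type*} [Group G] (S : Subgroup G) (m : ℕ)
    (r : Fin m → G)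
    (hS : CompleteRightReps S (Set.range r))
    (hquasi : ∀ i : Fin m,
      Function.Bijective
        (fun j : Fin m => Quotient.mk (QuotientGroup.rightRel S) (r i * r j)) ∧
      Function.Bijective
        (fun j : Fin m => Quotient.mk (QuotientGroup.rightRel S) (r j * r i))) :
    ∀ g : G, CompleteRightReps (conjBy S g) (Set.range r) := by
  intro g
  obtain ⟨_, ⟨⟨i, rfl⟩, hi⟩, -⟩ := hS g
  have hcosets : (fun j : Fin m => Quotient.mk (QuotientGroup.rightRel S) (g * r j)) =
      fun j => Quotient.mk (QuotientGroup.rightRel S) (r i * r j) :=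
    funext fun j => (mk_mul_right_eq_of_mul_inv_mem S hi (r j)).symm
  apply completeRightReps_conjBy_range_of_bijective S
  rw [hcosets]
  exact (hquasi i).1

theorem baer_converse {G : Type*} [Group G] [Fintype G] (S : Subgroup G) (m : ℕ)
    (r : Fin m → G)
    (hS : CompleteRightReps S (Set.range r))
    (hquasi : ∀ i : Fin m,
      Function.Bijective
        (fun j : Fin m => Quotient.mk (QuotientGroup.rightRel S) (r i * r j)) ∧
      Function.Bijective
        (fun j : Fin m => Quotient.mk (QuotientGroup.rightRel S) (r j * r i))) :
    ∀ g : G, CompleteRightReps (conjBy S g) (Set.range r) :=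
  baer_converse_general S m r hS hquasi
end

section
/- Let G be a finite group, S ≤ G, and suppose R ⊆ G is a complete set of right coset representatives of S^g for all g ∈ G. Then the sets sR := {sr : r ∈ R} for s ∈ S partition G, and each sR is again a complete set of right coset representatives of S^g for all g ∈ G. -/
section

variable {G : Type*} [Group G]

lemma mem_conjBy {S : Subgroup G} {g z : G} : z ∈ conjBy S g ↔ g * z * g⁻¹ ∈ S := by
  constructor
  · rintro ⟨a, ha, rfl⟩
    simpa [MulAut.conj, mul_assoc] using ha
  · intro h
    exact ⟨g * z * g⁻¹, h, by simp [MulAut.conj, mul_assoc]⟩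

lemma conjBy_one (S : Subgroup G) : conjBy S 1 = S := by
  ext z
  simp [mem_conjBy]

lemma conjBy_mul (S : Subgroup G) (g h : G) : conjBy S (g * h) = conjBy (conjBy S g) h := by
  ext z
  simp only [mem_conjBy, mul_inv_rev, mul_assoc]

lemma CompleteRightReps.image_mul_left {T : Subgroup G} {R : Set G}
    (hR : CompleteRightReps T R) (h : G) :
    CompleteRightReps (conjBy T h⁻¹) ((fun t : G => h * t) '' R) := by
  have key : ∀ x y : G, h * y * x⁻¹ ∈ conjBy T h⁻¹ ↔ y * (h⁻¹ * x)⁻¹ ∈ T := fun x y => by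
    rw [mem_conjBy]
    group
  intro x
  obtain ⟨r, ⟨hrR, hrT⟩, huniq⟩ := hR (h⁻¹ * x)
  refine ⟨h * r, ⟨⟨r, hrR, rfl⟩, (key x r).mpr hrT⟩, ?_⟩
  rintro _ ⟨⟨r', hr'R, rfl⟩, hr'⟩
  rw [huniq r' ⟨hr'R, (key x r').mp hr'⟩]

lemma CompleteRightReps.existsUnique_mem_image_mul {S : Subgroup G} {R : Set G}
    (hR : CompleteRightReps S R) (x : G) :
    ∃! s : S, x ∈ (fun t : G => (s : G) * t) '' R := by
  obtain ⟨r, ⟨hrR, hrS⟩, huniq⟩ := hR x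
  have hxr : x * r⁻¹ ∈ S := by simpa using S.inv_mem hrS
  refine ⟨⟨x * r⁻¹, hxr⟩, ⟨r, hrR, by group⟩, ?_⟩
  rintro ⟨s, hs⟩ ⟨r', hr'R, rfl⟩
  have hr' : r' * (s * r')⁻¹ ∈ S := by simpa using S.inv_mem hs
  obtain rfl := huniq r' ⟨hr'R, hr'⟩
  ext
  simp

end

theorem translates_of_universal_transversal_general {G : Type*} [Group G]
    (S : Subgroup G) (R : Set G)
    (hR : ∀ g : G, CompleteRightReps (conjBy S g) R) :
    (∀ x : G, ∃! s : S, x ∈ (fun t : G => (s : G) * t) '' R) ∧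
    (∀ s : S, ∀ g : G, CompleteRightReps (conjBy S g) ((fun t : G => (s : G) * t) '' R)) := by
  refine ⟨(conjBy_one S ▸ hR 1).existsUnique_mem_image_mul, fun s g => ?_⟩
  have hg : conjBy S g = conjBy (conjBy S (g * s)) (s : G)⁻¹ := by
    rw [← conjBy_mul, mul_inv_cancel_right]
  rw [hg]
  exact (hR (g * s)).image_mul_left s

theorem translates_of_universal_transversal {G : Type*} [Group G] [Fintype G]
    (S : Subgroup G) (R : Set G)
    (hR : ∀ g : G, CompleteRightReps (conjBy S g) R) :
    (∀ x : G, ∃! s : S, x ∈ (fun t : G => (s : G) * t) '' R) ∧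
    (∀ s : S, ∀ g : G, CompleteRightReps (conjBy S g) ((fun t : G => (s : G) * t) '' R)) :=
  translates_of_universal_transversal_general S R hR
end

section
/- Let Q₆ be the quasigroup of order 6 whose left translations are λ₁ = id, λ₂ = (123)(456), λ₃ = (132)(465), λ₄ = (14)(2536), λ₅ = (15)(2634), λ₆ = (16)(2435). Then LMult(Q₆) = ⟨λ₁,…,λ₆⟩ is a subgroup of the alternating group A₆, and the stabilizer of the point 1 in LMult(Q₆) has no complement in LMult(Q₆). -/
/-!
A complement `C` of the stabilizer of `0` in the transitive group `LMult(Q₆)` acts regularly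
on the six points, so `|C| = 6` and, by Cauchy, `C` contains an involution. Regularity makes
that involution fixed-point-free, i.e. a product of three transpositions, which is odd. But all
left translations of `Q₆` are even, so `C ≤ LMult(Q₆) ≤ A₆`.
-/

open Equiv Equiv.Perm MulAction

/-- The Cayley table of the quasigroup `Q₆` (0-indexed): `q6op ℓ q = ℓ·q`.
Its left translations are λ₁ = id, λ₂ = (123)(456), λ₃ = (132)(465),
λ₄ = (14)(2536), λ₅ = (15)(2634), λ₆ = (16)(2435). -/
def q6op : Fin 6 → Fin 6 → Fin 6 :=
  ![![0, 1, 2, 3, 4, 5],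
    ![1, 2, 0, 4, 5, 3],
    ![2, 0, 1, 5, 3, 4],
    ![3, 4, 5, 0, 2, 1],
    ![4, 5, 3, 1, 0, 2],
    ![5, 3, 4, 2, 1, 0]]

/-- The left multiplication group of `Q₆`. -/
def LMultQ6 : Subgroup (Equiv.Perm (Fin 6)) :=
  Subgroup.closure {σ : Equiv.Perm (Fin 6) | ∃ ℓ : Fin 6, ∀ q : Fin 6, σ q = q6op ℓ q}

section Complement

variable {G α : Type*} [Group G] [MulAction G α] {H C : Subgroup G} {a : α}

theorem exists_mem_smul_eq_of_forall_eq_mul_stabilizer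
    (hfac : ∀ g ∈ H, ∃ c ∈ C, ∃ h ∈ H ⊓ stabilizer G a, g = c * h) {g : G} (hg : g ∈ H) :
    ∃ c ∈ C, c • a = g • a := by
  obtain ⟨c, hc, h, ⟨-, hh⟩, rfl⟩ := hfac g hg
  exact ⟨c, hc, by rw [mul_smul, mem_stabilizer_iff.mp hh]⟩

theorem eq_one_of_inf_inf_stabilizer_eq_bot (hCH : C ≤ H)
    (hdisj : C ⊓ (H ⊓ stabilizer G a) = ⊥) {c : G} (hc : c ∈ C) (hca : c • a = a) : c = 1 :=
  Subgroup.mem_bot.mp (hdisj ▸ ⟨hc, hCH hc, hca⟩)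

end Complement

section Regular

variable {α : Type*} {C : Subgroup (Perm α)} {a : α}

theorem eq_one_of_mem_of_apply_eq_self_of_regular (htrans : ∀ x, ∃ d ∈ C, d a = x)
    (hfree : ∀ c ∈ C, c a = a → c = 1) {c : Perm α} (hc : c ∈ C) {x : α} (hcx : c x = x) :
    c = 1 := by
  obtain ⟨d, hd, rfl⟩ := htrans x
  have hconj : d⁻¹ * c * d = 1 :=
    hfree _ (C.mul_mem (C.mul_mem (C.inv_mem hd) hc) hd) (by simp [hcx])
  rw [mul_assoc, inv_mul_eq_one] at hconj
  exact mul_eq_right.mp hconj.symm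

theorem card_eq_of_regular (htrans : ∀ x, ∃ d ∈ C, d a = x)
    (hfree : ∀ c ∈ C, c a = a → c = 1) : Nat.card C = Nat.card α := by
  refine Nat.card_eq_of_bijective (fun c : C => (c : Perm α) a) ⟨fun c d hcd => ?_, fun x => ?_⟩
  · have : d⁻¹ * c = (1 : C) :=
      Subtype.ext (hfree _ (d⁻¹ * c).2 (by simp [show (c : Perm α) a = (d : Perm α) a from hcd]))
    exact (inv_mul_eq_one.mp this).symm
  · obtain ⟨d, hd, rfl⟩ := htrans x
    exact ⟨⟨d, hd⟩, rfl⟩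

theorem exists_mem_sign_eq_neg_one_of_regular [Fintype α] [DecidableEq α]
    (htrans : ∀ x, ∃ d ∈ C, d a = x) (hfree : ∀ c ∈ C, c a = a → c = 1)
    (hcard : Fintype.card α % 4 = 2) : ∃ c ∈ C, sign c = -1 := by
  have : Fintype C := Fintype.ofFinite C
  have hCcard : Fintype.card C = Fintype.card α := by
    simpa only [Nat.card_eq_fintype_card] using card_eq_of_regular htrans hfree
  obtain ⟨c, hc⟩ := exists_prime_orderOf_dvd_card (G := C) 2 (by omega)
  have hc2 : (c : Perm α) ^ 2 = 1 := by
    rw [← Subgroup.coe_pow, ← hc, pow_orderOf_eq_one, Subgroup.coe_one]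
  have hfpf : Fintype.card (Function.fixedPoints (c : Perm α)) = 0 := by
    refine Fintype.card_eq_zero_iff.mpr ⟨fun ⟨x, hx⟩ => ?_⟩
    have : (c : Perm α) = 1 := eq_one_of_mem_of_apply_eq_self_of_regular htrans hfree c.2 hx
    rw [← Subgroup.coe_one, Subtype.coe_inj] at this
    simp [this] at hc
  refine ⟨c, c.2, ?_⟩
  rw [sign_of_pow_two_eq_one hc2, hfpf, Nat.sub_zero]
  exact Odd.neg_one_pow (by rw [Nat.odd_iff]; omega)

end Regular

noncomputable def q6LeftMul (ℓ : Fin 6) : Perm (Fin 6) :=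
  Equiv.ofBijective (q6op ℓ) (by revert ℓ; decide)

theorem sign_q6LeftMul : ∀ ℓ, sign (q6LeftMul ℓ) = 1 := by decide

theorem q6LeftMul_apply_zero : ∀ ℓ, q6LeftMul ℓ 0 = ℓ := by decide

theorem q6LeftMul_mem_LMultQ6 (ℓ : Fin 6) : q6LeftMul ℓ ∈ LMultQ6 :=
  Subgroup.subset_closure ⟨ℓ, fun _ => rfl⟩

theorem LMultQ6_le_alternatingGroup : LMultQ6 ≤ alternatingGroup (Fin 6) := by
  refine (Subgroup.closure_le _).mpr ?_
  rintro σ ⟨ℓ, hσ⟩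
  rw [SetLike.mem_coe, mem_alternatingGroup, show σ = q6LeftMul ℓ from Equiv.ext hσ]
  exact sign_q6LeftMul ℓ

theorem q6_lmult_in_A6_and_stabilizer_has_no_complement :
    LMultQ6 ≤ alternatingGroup (Fin 6) ∧
    ¬ ∃ C : Subgroup (Equiv.Perm (Fin 6)),
        C ≤ LMultQ6 ∧
        (∀ g ∈ LMultQ6, ∃ c ∈ C,
          ∃ h ∈ LMultQ6 ⊓ MulAction.stabilizer (Equiv.Perm (Fin 6)) (0 : Fin 6),
            g = c * h) ∧
        C ⊓ (LMultQ6 ⊓ MulAction.stabilizer (Equiv.Perm (Fin 6)) (0 : Fin 6)) = ⊥ := by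
  refine ⟨LMultQ6_le_alternatingGroup, ?_⟩
  rintro ⟨C, hCH, hfac, hdisj⟩
  have htrans : ∀ x, ∃ c ∈ C, c 0 = x := fun x => by
    simpa only [Perm.smul_def, q6LeftMul_apply_zero] using
      exists_mem_smul_eq_of_forall_eq_mul_stabilizer hfac (q6LeftMul_mem_LMultQ6 x)
  have hfree : ∀ c ∈ C, c 0 = 0 → c = 1 := fun c hc =>
    eq_one_of_inf_inf_stabilizer_eq_bot hCH hdisj hc
  obtain ⟨c, hc, hsign⟩ := exists_mem_sign_eq_neg_one_of_regular htrans hfree (by simp)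
  have heven : sign c = 1 := mem_alternatingGroup.mp (LMultQ6_le_alternatingGroup (hCH hc))
  exact absurd (hsign.symm.trans heven) (by decide)
end

section
/- Let n > 2 with n ≡ 2 (mod 4), and let Q be a quasigroup on {1,…,n} all of whose left translations λ_ℓ are even permutations. Then in G = LMult(Q), the stabilizer G_c of any point c has no complement in G. -/
/-!
Every left translation lies in `LMult(Q)`, so a complement `C` of the stabilizer `G_c` is
transitive on `Q`, and it meets `G_c` trivially, so it acts regularly: `|C| = n` and no
non-identity element of `C` has a fixed point. Since `n` is even, Cauchy's theorem gives an
involution in `C`; it is a product of `n / 2` disjoint transpositions, hence odd because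
`n ≡ 2 (mod 4)`. But `C ≤ LMult(Q) ≤ Aₙ`.
-/

/-- The left multiplication group of a quasigroup `(Q, op)`. -/
def LMultGrp {Q : Type*} (op : Q → Q → Q) : Subgroup (Equiv.Perm Q) :=
  Subgroup.closure {σ : Equiv.Perm Q | ∃ ℓ : Q, ∀ q : Q, σ q = op ℓ q}

open Equiv MulAction

theorem ofBijective_mem_LMultGrp {Q : Type*} {op : Q → Q → Q} {ℓ : Q}
    (hℓ : Function.Bijective (op ℓ)) : Equiv.ofBijective _ hℓ ∈ LMultGrp op :=
  Subgroup.subset_closure ⟨ℓ, fun _ => rfl⟩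

theorem Equiv.Perm.sign_of_sq_eq_one_of_apply_ne {α : Type*} [Fintype α] [DecidableEq α]
    {σ : Perm α} (hσ : σ ^ 2 = 1) (hfix : ∀ x, σ x ≠ x) :
    Perm.sign σ = (-1) ^ (Fintype.card α / 2) := by
  have hnofix : Fintype.card (Function.fixedPoints σ) = 0 :=
    Fintype.card_eq_zero_iff.2 ⟨fun x => hfix x x.2⟩
  rw [Perm.sign_of_pow_two_eq_one hσ, hnofix, Nat.sub_zero]

section RegularSubgroup

variable {α : Type*} {C : Subgroup (Perm α)} {c : α}

theorem exists_mem_apply_eq_of_forall_eq_mul_stabilizer {H : Subgroup (Perm α)}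
    (hfact : ∀ g ∈ H, ∃ c' ∈ C, ∃ h ∈ H ⊓ stabilizer (Perm α) c, g = c' * h)
    {g : Perm α} (hg : g ∈ H) : ∃ c' ∈ C, c' c = g c := by
  obtain ⟨c', hc', h, ⟨-, hh⟩, rfl⟩ := hfact g hg
  exact ⟨c', hc', by rw [Perm.mul_apply, show h c = c from hh]⟩

variable (hfree : C ⊓ stabilizer (Perm α) c = ⊥)
include hfree

theorem eq_one_of_mem_of_apply_eq_self {g : Perm α} (hg : g ∈ C) (hgc : g c = c) : g = 1 := by
  have hg' : g ∈ C ⊓ stabilizer (Perm α) c := ⟨hg, hgc⟩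
  rwa [hfree, Subgroup.mem_bot] at hg'

variable (htrans : ∀ x, ∃ g ∈ C, g c = x)
include htrans

theorem apply_ne_self_of_mem_of_ne_one {g : Perm α} (hg : g ∈ C) (hg1 : g ≠ 1) (x : α) :
    g x ≠ x := by
  intro hgx
  obtain ⟨t, ht, rfl⟩ := htrans x
  have hconj : t⁻¹ * g * t = 1 :=
    eq_one_of_mem_of_apply_eq_self hfree (mul_mem (mul_mem (inv_mem ht) hg) ht)
      (by simp [Perm.mul_apply, hgx])
  exact hg1 (by simpa [mul_assoc] using congrArg (fun z => t * z * t⁻¹) hconj)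

theorem card_eq_card_of_inf_stabilizer_eq_bot : Nat.card C = Nat.card α := by
  refine Nat.card_eq_of_bijective (fun g : C => (g : Perm α) c) ⟨fun a b hab => ?_, fun x => ?_⟩
  · have hba : (b : Perm α)⁻¹ * a = 1 :=
      eq_one_of_mem_of_apply_eq_self hfree (mul_mem (inv_mem b.2) a.2)
        (by simp [Perm.mul_apply, show (a : Perm α) c = (b : Perm α) c from hab])
    exact Subtype.ext (inv_mul_eq_one.1 hba).symm
  · obtain ⟨g, hg, hgc⟩ := htrans x
    exact ⟨⟨g, hg⟩, hgc⟩

theorem not_le_alternatingGroup_of_inf_stabilizer_eq_bot [Fintype α] [DecidableEq α]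
    (hα : Fintype.card α % 4 = 2) : ¬ C ≤ alternatingGroup α := by
  intro hCalt
  have : Fact (Nat.Prime 2) := ⟨Nat.prime_two⟩
  have : Finite C := Subtype.finite
  obtain ⟨g, hg⟩ := exists_prime_orderOf_dvd_card' (G := C) 2 (by
    rw [card_eq_card_of_inf_stabilizer_eq_bot hfree htrans, Nat.card_eq_fintype_card]; omega)
  have hg2 : orderOf (g : Perm α) = 2 := by rwa [Subgroup.orderOf_coe]
  have hg1 : (g : Perm α) ≠ 1 := by
    rintro h
    rw [h, orderOf_one] at hg2
    omega
  have hsign : Perm.sign (g : Perm α) = -1 := by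
    rw [Perm.sign_of_sq_eq_one_of_apply_ne (hg2 ▸ pow_orderOf_eq_one _)
      (apply_ne_self_of_mem_of_ne_one hfree htrans g.2 hg1)]
    exact Odd.neg_one_pow (Nat.odd_iff.2 (by omega))
  rw [(Perm.mem_alternatingGroup).1 (hCalt g.2)] at hsign
  exact absurd hsign (by decide)

end RegularSubgroup

theorem stabilizer_has_no_complement_in_lmult_general (n : ℕ) (h4 : n % 4 = 2)
    (op : Fin n → Fin n → Fin n)
    (hl : ∀ a : Fin n, Function.Bijective (fun x : Fin n => op a x))
    (hr : ∀ a : Fin n, Function.Bijective (fun x : Fin n => op x a))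
    (heven : ∀ σ : Equiv.Perm (Fin n),
      (∃ ℓ : Fin n, ∀ q : Fin n, σ q = op ℓ q) → σ ∈ alternatingGroup (Fin n))
    (c : Fin n) :
    ¬ ∃ C : Subgroup (Equiv.Perm (Fin n)),
        C ≤ LMultGrp op ∧
        (∀ g ∈ LMultGrp op, ∃ c' ∈ C,
          ∃ h ∈ LMultGrp op ⊓ MulAction.stabilizer (Equiv.Perm (Fin n)) c,
            g = c' * h) ∧
        C ⊓ (LMultGrp op ⊓ MulAction.stabilizer (Equiv.Perm (Fin n)) c) = ⊥ := by
  rintro ⟨C, hCle, hfact, hbot⟩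
  have hfree : C ⊓ stabilizer (Perm (Fin n)) c = ⊥ := by
    rwa [← inf_assoc, inf_eq_left.2 hCle] at hbot
  have htrans : ∀ x, ∃ g ∈ C, g c = x := fun x => by
    obtain ⟨ℓ, rfl⟩ := (hr c).2 x
    exact exists_mem_apply_eq_of_forall_eq_mul_stabilizer hfact (ofBijective_mem_LMultGrp (hl ℓ))
  have hLMult_even : LMultGrp op ≤ alternatingGroup (Fin n) :=
    (Subgroup.closure_le _).2 fun σ hσ => heven σ hσ
  exact not_le_alternatingGroup_of_inf_stabilizer_eq_bot hfree htrans
    (by rwa [Fintype.card_fin]) (hCle.trans hLMult_even)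

theorem stabilizer_has_no_complement_in_lmult (n : ℕ) (hn : 2 < n) (h4 : n % 4 = 2)
    (op : Fin n → Fin n → Fin n)
    (hl : ∀ a : Fin n, Function.Bijective (fun x : Fin n => op a x))
    (hr : ∀ a : Fin n, Function.Bijective (fun x : Fin n => op x a))
    (heven : ∀ σ : Equiv.Perm (Fin n),
      (∃ ℓ : Fin n, ∀ q : Fin n, σ q = op ℓ q) → σ ∈ alternatingGroup (Fin n))
    (c : Fin n) :
    ¬ ∃ C : Subgroup (Equiv.Perm (Fin n)),
        C ≤ LMultGrp op ∧
        (∀ g ∈ LMultGrp op, ∃ c' ∈ C,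
          ∃ h ∈ LMultGrp op ⊓ MulAction.stabilizer (Equiv.Perm (Fin n)) c,
            g = c' * h) ∧
        C ⊓ (LMultGrp op ⊓ MulAction.stabilizer (Equiv.Perm (Fin n)) c) = ⊥ :=
  stabilizer_has_no_complement_in_lmult_general n h4 op hl hr heven c
end

section
/- For every positive integer n, ℤ/n²ℤ admits a Cayley-Sudoku arrangement: with S = nℤ/n²ℤ the subgroup of order n, the cosets S, S+1, …, S+(n−1) and the sets Lᵢ = {in, in+1, …, in+n−1} for 0 ≤ i ≤ n−1 satisfy that for each i and j, the map Lᵢ × (S + j) → ℤ/n²ℤ, (l, c) ↦ l + c, is a bijection. -/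
/-!
Write `i * n + a` for the elements of `Lᵢ` and `s * n + j` for those of `S + j`. Their sum is
`(i * n + j) + (a + n * s)`, and `(a, s) ↦ a + n * s` enumerates `0, …, n² - 1` in base `n`, i.e.
all of `ℤ/n²ℤ` exactly once; translating by `i * n + j` preserves this.
-/

open Function

theorem bijective_setOf_add_of_bijective {α β G : Type*} [Add G] {f : α → G} {g : β → G}
    (h : Bijective fun p : α × β => f p.1 + g p.2) :
    Bijective fun p : {z | ∃ a, z = f a} × {z | ∃ b, z = g b} => (p.1 : G) + p.2 := by
  let e : α × β → {z | ∃ a, z = f a} × {z | ∃ b, z = g b} :=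
    fun p => (⟨f p.1, p.1, rfl⟩, ⟨g p.2, p.2, rfl⟩)
  have he : Surjective e := by
    rintro ⟨⟨_, a, rfl⟩, ⟨_, b, rfl⟩⟩
    exact ⟨(a, b), rfl⟩
  have hcomp : Bijective ((fun p : {z | ∃ a, z = f a} × {z | ∃ b, z = g b} =>
      (p.1 : G) + p.2) ∘ e) := h
  exact ⟨hcomp.injective.of_comp_right he, hcomp.surjective.of_comp⟩

namespace ZMod

theorem natCast_finVal_bijective (m : ℕ) [NeZero m] :
    Bijective fun k : Fin m => ((k : ℕ) : ZMod m) := by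
  refine (Fintype.bijective_iff_injective_and_card _).2 ⟨fun k k' h => Fin.ext ?_, by simp⟩
  simpa [val_natCast_of_lt k.isLt, val_natCast_of_lt k'.isLt] using congrArg val h

theorem natCast_digits_bijective (m n : ℕ) [NeZero (m * n)] :
    Bijective fun p : Fin m × Fin n => ((p.2 + n * p.1 : ℕ) : ZMod (m * n)) :=
  (natCast_finVal_bijective (m * n)).comp finProdFinEquiv.bijective

theorem natCast_add_mul_bijective_sq (n : ℕ) [NeZero n] :
    Bijective fun p : Fin n × Fin n => ((p.1 + n * p.2 : ℕ) : ZMod (n ^ 2)) := by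
  rw [sq]
  exact (natCast_digits_bijective n n).comp Prod.swap_bijective

end ZMod

theorem zmod_sq_cayley_sudoku_general (n : ℕ) :
    ∀ i j : Fin n,
      Function.Bijective
        (fun p :
            ({z : ZMod (n ^ 2) | ∃ a : Fin n, z = (((i : ℕ) * n + (a : ℕ) : ℕ) : ZMod (n ^ 2))}
              : Set (ZMod (n ^ 2))) ×
            ({z : ZMod (n ^ 2) | ∃ s : Fin n, z = (((s : ℕ) * n + (j : ℕ) : ℕ) : ZMod (n ^ 2))}
              : Set (ZMod (n ^ 2))) =>
          (p.1 : ZMod (n ^ 2)) + (p.2 : ZMod (n ^ 2))) := by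
  intro i j
  have : NeZero n := ⟨i.pos.ne'⟩
  refine bijective_setOf_add_of_bijective ?_
  have hsum : ∀ p : Fin n × Fin n,
      ((((i : ℕ) * n + (p.1 : ℕ) : ℕ) : ZMod (n ^ 2)) + (((p.2 : ℕ) * n + (j : ℕ) : ℕ))) =
        (((i : ℕ) * n + (j : ℕ) : ℕ) : ZMod (n ^ 2)) + (((p.1 : ℕ) + n * p.2 : ℕ)) := by
    intro p
    push_cast
    ring
  simp only [hsum]
  exact (Equiv.addLeft _).bijective.comp (ZMod.natCast_add_mul_bijective_sq n)

theorem zmod_sq_cayley_sudoku (n : ℕ) (hn : 0 < n) :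
    ∀ i j : Fin n,
      Function.Bijective
        (fun p :
            ({z : ZMod (n ^ 2) | ∃ a : Fin n, z = (((i : ℕ) * n + (a : ℕ) : ℕ) : ZMod (n ^ 2))}
              : Set (ZMod (n ^ 2))) ×
            ({z : ZMod (n ^ 2) | ∃ s : Fin n, z = (((s : ℕ) * n + (j : ℕ) : ℕ) : ZMod (n ^ 2))}
              : Set (ZMod (n ^ 2))) =>
          (p.1 : ZMod (n ^ 2)) + (p.2 : ZMod (n ^ 2))) :=
  zmod_sq_cayley_sudoku_general n
end
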